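/- arXiv:1307.0044 — 3 statements merged into one kernel-verified Lean document; each statement's English description precedes it below -/
import Mathlib

section
/- Consider the battery-model energy allocation problem with unit conversion efficiency, horizon K, integer capacity C, initial storage level B₀ ≤ C, final requirement B_K = 0, harvest amounts Q(i) ∈ ℕ for i = 0,…,K−1, leakage functions L(i,·) : ℕ → ℕ such that for each i, L(i,·) is nondecreasing, L(i,B) ≤ B for all B, and B ↦ B − L(i,B) is nondecreasing, spending-rate set S = { j·s₀ : 1 ≤ j ≤ m } for some integers s₀ > 0 and m ≥ 1, and a utility function U : ℕ → ℕ satisfying U(x+y) = U(x) + U(y) for all x, y ∈ ℕ. Let s^g be the greedy spending vector defined by: B^g(0) = B₀, and in each slot i, s^g(i) is the largest s ∈ S ∪ {0} with s ≤ B^g(i) and B^g(i) + Q(i) − L(i, B^g(i)) − s ≥ 0, with B^g(i+1) = min(B^g(i) + Q(i) − L(i, B^g(i)) − s^g(i), C). Then s^g is feasible, and for every feasible spending vector s one has Σ_{i=0}^{K−1} U(s(i)) ≤ Σ_{i=0}^{K−1} U(s^g(i)); that is, the greedy online algorithm is optimal. -/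
/-- Battery level evolution (in `ℤ`) for the battery-model energy allocation
problem with unit conversion efficiency: initial level `B₀`, capacity `C`,
harvests `Q`, leakage `L`, spending vector `s`. -/
def batteryLevel (B₀ C : ℕ) (Q : ℕ → ℕ) (L : ℕ → ℕ → ℕ) (s : ℕ → ℕ) : ℕ → ℤ
  | 0 => (B₀ : ℤ)
  | i + 1 =>
      min (batteryLevel B₀ C Q L s i + (Q i : ℤ)
            - (L i (batteryLevel B₀ C Q L s i).toNat : ℤ) - (s i : ℤ)) (C : ℤ)

/-- Feasibility of a spending vector `s` over horizon `K`, capacity `C`,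
initial level `B₀`, final requirement `BK`, harvests `Q`, leakage `L`,
and spending-rate set `S`. -/
def Feasible (K C B₀ BK : ℕ) (Q : ℕ → ℕ) (L : ℕ → ℕ → ℕ) (S : Set ℕ)
    (s : ℕ → ℕ) : Prop :=
  (∀ i < K, s i ∈ S ∪ {0}) ∧
  (∀ i < K, (s i : ℤ) ≤ batteryLevel B₀ C Q L s i) ∧
  (∀ i ≤ K, 0 ≤ batteryLevel B₀ C Q L s i) ∧
  (BK : ℤ) ≤ batteryLevel B₀ C Q L s K

/-!
Compare a feasible spending vector `s` with the greedy one `sg` through the deficit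
`D i = ∑ r < i, (sg r - s r)`. By induction, `D i ≥ 0`, `s₀ ∣ D i`, and the battery of `s` is at most
`D i` above that of `sg`. In the inductive step, `s i - D i` is either `≤ 0` or again an admissible
rate that greedy could afford, because the level net of leakage, `b - L i b`, is monotone and grows
by at most the growth of `b`; so `sg i ≥ s i - D i`. Hence `∑ s ≤ ∑ sg`, which suffices since an
additive utility on `ℕ` is `U n = n * U 1`.
-/

def multiplesUpTo (s₀ m : ℕ) : Set ℕ := {x | ∃ j ≤ m, x = j * s₀}

theorem positiveMultiples_union_zero (s₀ m : ℕ) :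
    {x | ∃ j, 1 ≤ j ∧ j ≤ m ∧ x = j * s₀} ∪ {0} = multiplesUpTo s₀ m := by
  ext x
  constructor
  · rintro (⟨j, -, hj, rfl⟩ | rfl)
    exacts [⟨j, hj, rfl⟩, ⟨0, Nat.zero_le m, (zero_mul s₀).symm⟩]
  · rintro ⟨j, hj, rfl⟩
    rcases Nat.eq_zero_or_pos j with rfl | hj0
    · exact Or.inr (zero_mul s₀)
    · exact Or.inl ⟨j, hj0, hj, rfl⟩

theorem dvd_of_mem_multiplesUpTo {s₀ m x : ℕ} (hx : x ∈ multiplesUpTo s₀ m) : s₀ ∣ x := by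
  obtain ⟨j, -, rfl⟩ := hx
  exact dvd_mul_left s₀ j

theorem tsub_mem_multiplesUpTo {s₀ m x : ℕ} (hx : x ∈ multiplesUpTo s₀ m) (d : ℕ) (hd : s₀ ∣ d) :
    x - d ∈ multiplesUpTo s₀ m := by
  obtain ⟨j, hj, rfl⟩ := hx
  obtain ⟨k, rfl⟩ := hd
  exact ⟨j - k, (Nat.sub_le j k).trans hj, by rw [Nat.sub_mul, mul_comm s₀]⟩

theorem apply_eq_mul_apply_one {U : ℕ → ℕ} (hU : ∀ x y, U (x + y) = U x + U y) (n : ℕ) :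
    U n = n * U 1 := by
  induction n with
  | zero => have := hU 0 0; simp only [add_zero] at this; omega
  | succ n ih => rw [hU, ih, Nat.succ_mul]

theorem sub_leak_sub_sub_leak_le {ℓ : ℕ → ℕ} (hmono : Monotone ℓ) (hle : ∀ b, ℓ b ≤ b)
    (hdiff : Monotone fun b => b - ℓ b) (t g : ℕ) :
    ((t : ℤ) - ℓ t) - ((g : ℤ) - ℓ g) ≤ max ((t : ℤ) - g) 0 := by
  rcases le_total g t with h | h
  · have := hmono h
    omega
  · have hnet : t - ℓ t ≤ g - ℓ g := hdiff h
    have := hle t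
    have := hle g
    omega

section Deficit

variable {A : Set ℕ} {s₀ : ℕ} {ℓ : ℕ → ℕ} {q t g x y : ℕ} {D : ℤ}

theorem sub_le_greedy (hA : ∀ x ∈ A, ∀ d, s₀ ∣ d → x - d ∈ A) (hmono : Monotone ℓ)
    (hle : ∀ b, ℓ b ≤ b) (hdiff : Monotone fun b => b - ℓ b)
    (hD : 0 ≤ D) (hDdvd : (s₀ : ℤ) ∣ D) (htg : (t : ℤ) - g ≤ D)
    (hx : x ∈ A) (hxt : x ≤ t) (hxq : 0 ≤ (t : ℤ) + q - ℓ t - x)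
    (hy : ∀ z ∈ A, (z : ℤ) ≤ g → 0 ≤ (g : ℤ) + q - ℓ g - z → z ≤ y) :
    (x : ℤ) - D ≤ y := by
  lift D to ℕ using hD
  have hnet := sub_leak_sub_sub_leak_le hmono hle hdiff t g
  have := hle g
  have := hy (x - D) (hA x hx D (Int.natCast_dvd_natCast.mp hDdvd)) (by omega) (by omega)
  omega

theorem deficit_step (hAdvd : ∀ x ∈ A, s₀ ∣ x) (hA : ∀ x ∈ A, ∀ d, s₀ ∣ d → x - d ∈ A)
    (hmono : Monotone ℓ) (hle : ∀ b, ℓ b ≤ b) (hdiff : Monotone fun b => b - ℓ b)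
    (hD : 0 ≤ D) (hDdvd : (s₀ : ℤ) ∣ D) (htg : (t : ℤ) - g ≤ D)
    (hx : x ∈ A) (hxt : x ≤ t) (hxq : 0 ≤ (t : ℤ) + q - ℓ t - x)
    (hyA : y ∈ A) (hy : ∀ z ∈ A, (z : ℤ) ≤ g → 0 ≤ (g : ℤ) + q - ℓ g - z → z ≤ y) (C : ℕ) :
    0 ≤ D + ((y : ℤ) - x) ∧
    min ((t : ℤ) + q - ℓ t - x) C - min ((g : ℤ) + q - ℓ g - y) C ≤ D + ((y : ℤ) - x) ∧
    (s₀ : ℤ) ∣ D + ((y : ℤ) - x) := by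
  have hcatch := sub_le_greedy hA hmono hle hdiff hD hDdvd htg hx hxt hxq hy
  have hnet := sub_leak_sub_sub_leak_le hmono hle hdiff t g
  refine ⟨by omega, by omega, ?_⟩
  exact hDdvd.add ((Int.natCast_dvd_natCast.2 (hAdvd y hyA)).sub
    (Int.natCast_dvd_natCast.2 (hAdvd x hx)))

end Deficit

section Battery

variable {B₀ C : ℕ} {Q : ℕ → ℕ} {L : ℕ → ℕ → ℕ}

theorem batteryLevel_succ (s : ℕ → ℕ) (i : ℕ) :
    batteryLevel B₀ C Q L s (i + 1) =
      min (batteryLevel B₀ C Q L s i + (Q i : ℤ)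
        - (L i (batteryLevel B₀ C Q L s i).toNat : ℤ) - (s i : ℤ)) (C : ℤ) :=
  rfl

theorem batteryLevel_nonneg {s : ℕ → ℕ} {K : ℕ}
    (h : ∀ i < K, 0 ≤ batteryLevel B₀ C Q L s i + (Q i : ℤ)
      - (L i (batteryLevel B₀ C Q L s i).toNat : ℤ) - (s i : ℤ)) :
    ∀ i ≤ K, 0 ≤ batteryLevel B₀ C Q L s i
  | 0, _ => Int.natCast_nonneg B₀
  | i + 1, hi => le_min (h i hi) (Int.natCast_nonneg C)

theorem deficit_invariant {A : Set ℕ} {s₀ : ℕ} (hAdvd : ∀ x ∈ A, s₀ ∣ x)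
    (hA : ∀ x ∈ A, ∀ d, s₀ ∣ d → x - d ∈ A)
    (hmono : ∀ i, Monotone (L i)) (hle : ∀ i b, L i b ≤ b)
    (hdiff : ∀ i, Monotone fun b => b - L i b) {s sg : ℕ → ℕ} {K : ℕ}
    (hs : ∀ i < K, s i ∈ A) (hs_le : ∀ i < K, (s i : ℤ) ≤ batteryLevel B₀ C Q L s i)
    (hs_nonneg : ∀ i ≤ K, 0 ≤ batteryLevel B₀ C Q L s i)
    (hsg : ∀ i < K, sg i ∈ A) (hsg_nonneg : ∀ i ≤ K, 0 ≤ batteryLevel B₀ C Q L sg i)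
    (hsg_max : ∀ i < K, ∀ x ∈ A, (x : ℤ) ≤ batteryLevel B₀ C Q L sg i →
      0 ≤ batteryLevel B₀ C Q L sg i + (Q i : ℤ)
        - (L i (batteryLevel B₀ C Q L sg i).toNat : ℤ) - (x : ℤ) → x ≤ sg i) :
    ∀ i ≤ K, 0 ≤ ∑ r ∈ Finset.range i, ((sg r : ℤ) - s r) ∧
      batteryLevel B₀ C Q L s i - batteryLevel B₀ C Q L sg i ≤
        ∑ r ∈ Finset.range i, ((sg r : ℤ) - s r) ∧
      (s₀ : ℤ) ∣ ∑ r ∈ Finset.range i, ((sg r : ℤ) - s r) := by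
  intro i
  induction i with
  | zero => simp [batteryLevel]
  | succ n ih =>
    intro hn
    obtain ⟨hD, hlevel, hDdvd⟩ := ih (by omega)
    obtain ⟨t, ht⟩ := Int.eq_ofNat_of_zero_le (hs_nonneg n (by omega))
    obtain ⟨g, hg⟩ := Int.eq_ofNat_of_zero_le (hsg_nonneg n (by omega))
    have hxq : 0 ≤ (t : ℤ) + Q n - L n t - s n := by
      have := hs_nonneg (n + 1) hn
      rw [batteryLevel_succ, ht, Int.toNat_natCast] at this
      exact this.trans (min_le_left _ _)
    have hy := hsg_max n hn
    rw [hg, Int.toNat_natCast] at hy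
    rw [ht, hg] at hlevel
    rw [Finset.sum_range_succ, batteryLevel_succ, batteryLevel_succ, ht, hg, Int.toNat_natCast,
      Int.toNat_natCast]
    exact deficit_step hAdvd hA (hmono n) (hle n) (hdiff n) hD hDdvd hlevel (hs n hn)
      (by exact_mod_cast ht ▸ hs_le n hn) hxq (hsg n hn) hy C

end Battery

theorem greedy_optimal_general
    (K C B₀ : ℕ)
    (Q : ℕ → ℕ) (L : ℕ → ℕ → ℕ)
    (hLmono : ∀ i, Monotone (L i))
    (hLle : ∀ i B, L i B ≤ B)
    (hLdiff : ∀ i, Monotone (fun B => B - L i B))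
    (s₀ m : ℕ)
    (S : Set ℕ) (hSdef : S = {x | ∃ j, 1 ≤ j ∧ j ≤ m ∧ x = j * s₀})
    (U : ℕ → ℕ) (hU : ∀ x y, U (x + y) = U x + U y)
    (sg : ℕ → ℕ)
    (hsgmem : ∀ i < K, sg i ∈ S ∪ {0})
    (hsgfeas : ∀ i < K, (sg i : ℤ) ≤ batteryLevel B₀ C Q L sg i ∧
        0 ≤ batteryLevel B₀ C Q L sg i + (Q i : ℤ)
              - (L i (batteryLevel B₀ C Q L sg i).toNat : ℤ) - (sg i : ℤ))
    (hsgmax : ∀ i < K, ∀ x ∈ S ∪ {0},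
        (x : ℤ) ≤ batteryLevel B₀ C Q L sg i →
        0 ≤ batteryLevel B₀ C Q L sg i + (Q i : ℤ)
              - (L i (batteryLevel B₀ C Q L sg i).toNat : ℤ) - (x : ℤ) →
        x ≤ sg i) :
    Feasible K C B₀ 0 Q L S sg ∧
    ∀ s : ℕ → ℕ, Feasible K C B₀ 0 Q L S s →
      ∑ i ∈ Finset.range K, U (s i) ≤ ∑ i ∈ Finset.range K, U (sg i) := by
  have hsg_nonneg := batteryLevel_nonneg fun i hi => (hsgfeas i hi).2
  refine ⟨⟨hsgmem, fun i hi => (hsgfeas i hi).1, hsg_nonneg, hsg_nonneg K le_rfl⟩, ?_⟩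
  rintro s ⟨hs, hs_le, hs_nonneg, -⟩
  rw [hSdef, positiveMultiples_union_zero] at hs hsgmem hsgmax
  have hdeficit := (deficit_invariant (fun _ => dvd_of_mem_multiplesUpTo)
    (fun _ => tsub_mem_multiplesUpTo) hLmono hLle hLdiff hs hs_le hs_nonneg hsgmem hsg_nonneg
    hsgmax K le_rfl).1
  rw [Finset.sum_sub_distrib, sub_nonneg] at hdeficit
  simp only [apply_eq_mul_apply_one hU (s _), apply_eq_mul_apply_one hU (sg _), ← Finset.sum_mul]
  exact Nat.mul_le_mul_right _ (by exact_mod_cast hdeficit)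

/-- The greedy online algorithm is feasible and optimal for the battery model
with `B_K = 0`, additive utility, and spending set `{j·s₀ : 1 ≤ j ≤ m}`. -/
theorem greedy_optimal
    (K C B₀ : ℕ) (hB₀C : B₀ ≤ C)
    (Q : ℕ → ℕ) (L : ℕ → ℕ → ℕ)
    (hLmono : ∀ i, Monotone (L i))
    (hLle : ∀ i B, L i B ≤ B)
    (hLdiff : ∀ i, Monotone (fun B => B - L i B))
    (s₀ m : ℕ) (hs₀ : 0 < s₀) (hm : 1 ≤ m)
    (S : Set ℕ) (hSdef : S = {x | ∃ j, 1 ≤ j ∧ j ≤ m ∧ x = j * s₀})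
    (U : ℕ → ℕ) (hU : ∀ x y, U (x + y) = U x + U y)
    (sg : ℕ → ℕ)
    (hsgmem : ∀ i < K, sg i ∈ S ∪ {0})
    (hsgfeas : ∀ i < K, (sg i : ℤ) ≤ batteryLevel B₀ C Q L sg i ∧
        0 ≤ batteryLevel B₀ C Q L sg i + (Q i : ℤ)
              - (L i (batteryLevel B₀ C Q L sg i).toNat : ℤ) - (sg i : ℤ))
    (hsgmax : ∀ i < K, ∀ x ∈ S ∪ {0},
        (x : ℤ) ≤ batteryLevel B₀ C Q L sg i →
        0 ≤ batteryLevel B₀ C Q L sg i + (Q i : ℤ)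
              - (L i (batteryLevel B₀ C Q L sg i).toNat : ℤ) - (x : ℤ) →
        x ≤ sg i) :
    Feasible K C B₀ 0 Q L S sg ∧
    ∀ s : ℕ → ℕ, Feasible K C B₀ 0 Q L S s →
      ∑ i ∈ Finset.range K, U (s i) ≤ ∑ i ∈ Finset.range K, U (sg i) :=
  greedy_optimal_general K C B₀ Q L hLmono hLle hLdiff s₀ m S hSdef U hU sg hsgmem hsgfeas hsgmax
end

section
/- Let K ≥ 1, let F be a nonempty set of vectors s : {0,…,K−1} → ℕ (the feasible solutions), let U : ℕ → ℕ be any function, and let μ > 0 be a real number. Suppose s* ∈ F maximizes Σ_{i=0}^{K−1} U(s(i)) over all s ∈ F, and s̃ ∈ F maximizes Σ_{i=0}^{K−1} ⌊U(s(i))/μ⌋ over all s ∈ F. Then Σ_{i=0}^{K−1} U(s̃(i)) ≥ Σ_{i=0}^{K−1} U(s*(i)) − K·μ. -/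
/-!
Rounding down `u / μ` loses less than `1`, so `μ * ⌊u / μ⌋` lies in `(u - μ, u]`. Over `K`
coordinates the scaled objective `μ * ∑ ⌊U (s i) / μ⌋` is therefore within `K * μ` below the true
one, and comparing `s*` with `s̃` through the scaled objective loses at most `K * μ`.
-/

open Finset

section FloorDiv

variable {μ : ℝ}

theorem mul_floor_div_le (hμ : 0 < μ) (x : ℝ) : μ * ⌊x / μ⌋ ≤ x :=
  (le_div_iff₀' hμ).mp (Int.floor_le _)

theorem sub_lt_mul_floor_div (hμ : 0 < μ) (x : ℝ) : x - μ < μ * ⌊x / μ⌋ := by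
  have h : x < μ * (⌊x / μ⌋ + 1) := (div_lt_iff₀' hμ).mp (Int.lt_floor_add_one _)
  linarith

variable {ι : Type*} (s : Finset ι) (f : ι → ℝ)

theorem mul_sum_floor_div_le (hμ : 0 < μ) :
    μ * ∑ i ∈ s, (⌊f i / μ⌋ : ℝ) ≤ ∑ i ∈ s, f i := by
  rw [mul_sum]
  exact sum_le_sum fun i _ => mul_floor_div_le hμ (f i)

theorem sum_sub_card_mul_le_mul_sum_floor_div (hμ : 0 < μ) :
    ∑ i ∈ s, f i - #s * μ ≤ μ * ∑ i ∈ s, (⌊f i / μ⌋ : ℝ) := by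
  have h : ∑ i ∈ s, (f i - μ) ≤ ∑ i ∈ s, μ * ⌊f i / μ⌋ :=
    sum_le_sum fun i _ => (sub_lt_mul_floor_div hμ (f i)).le
  rwa [sum_sub_distrib, sum_const, nsmul_eq_mul, ← mul_sum] at h

end FloorDiv

theorem scaled_optimum_close_general
    (K : ℕ)
    (F : Set (ℕ → ℕ))
    (U : ℕ → ℕ) (μ : ℝ) (hμ : 0 < μ)
    (sstar : ℕ → ℕ) (hstarF : sstar ∈ F)
    (stilde : ℕ → ℕ)
    (htilde : ∀ s ∈ F,
      ∑ i ∈ Finset.range K, ⌊(U (s i) : ℝ) / μ⌋ ≤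
        ∑ i ∈ Finset.range K, ⌊(U (stilde i) : ℝ) / μ⌋) :
    (∑ i ∈ Finset.range K, (U (sstar i) : ℝ)) - K * μ ≤
      ∑ i ∈ Finset.range K, (U (stilde i) : ℝ) := by
  calc (∑ i ∈ range K, (U (sstar i) : ℝ)) - K * μ
      ≤ μ * ∑ i ∈ range K, (⌊(U (sstar i) : ℝ) / μ⌋ : ℝ) := by
        simpa using sum_sub_card_mul_le_mul_sum_floor_div (range K) (fun i => (U (sstar i) : ℝ)) hμ
    _ ≤ μ * ∑ i ∈ range K, (⌊(U (stilde i) : ℝ) / μ⌋ : ℝ) := by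
        gcongr _ * ?_
        exact_mod_cast htilde sstar hstarF
    _ ≤ ∑ i ∈ range K, (U (stilde i) : ℝ) :=
        mul_sum_floor_div_le (range K) (fun i => (U (stilde i) : ℝ)) hμ

/-- Scaling lemma: if `s*` maximizes `∑ U(s(i))` over the feasible set `F` and
`s̃` maximizes the scaled-and-rounded utility `∑ ⌊U(s(i))/μ⌋` over `F`, then
`∑ U(s̃(i)) ≥ ∑ U(s*(i)) − K·μ`. -/
theorem scaled_optimum_close
    (K : ℕ) (hK : 1 ≤ K)
    (F : Set (ℕ → ℕ)) (hF : F.Nonempty)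
    (U : ℕ → ℕ) (μ : ℝ) (hμ : 0 < μ)
    (sstar : ℕ → ℕ) (hstarF : sstar ∈ F)
    (hstar : ∀ s ∈ F, ∑ i ∈ Finset.range K, U (s i) ≤
      ∑ i ∈ Finset.range K, U (sstar i))
    (stilde : ℕ → ℕ) (htildeF : stilde ∈ F)
    (htilde : ∀ s ∈ F,
      ∑ i ∈ Finset.range K, ⌊(U (s i) : ℝ) / μ⌋ ≤
        ∑ i ∈ Finset.range K, ⌊(U (stilde i) : ℝ) / μ⌋) :
    (∑ i ∈ Finset.range K, (U (sstar i) : ℝ)) - K * μ ≤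
      ∑ i ∈ Finset.range K, (U (stilde i) : ℝ) :=
  scaled_optimum_close_general K F U μ hμ sstar hstarF stilde htilde
end

section
/- For every n ≥ 1, every w : {1,…,n} → ℕ, and every c ∈ ℕ, the following are equivalent: (a) there exists x : {1,…,n} → {0,1} with Σ_{j=1}^{n} w_j·x_j = c; (b) there exist x, y : {1,…,n} → ℕ with Σ_{j=1}^{n} [ (2^{n−j} + 2ⁿ·w_j)·x_j + 2^{n−j}·y_j ] = 2ⁿ·c + 2ⁿ − 1 and Σ_{j=1}^{n} (x_j + y_j) ≤ n. Moreover, any x, y witnessing (b) necessarily satisfy x_j + y_j = 1 (hence x_j ∈ {0,1}) for every j, and Σ_{j=1}^{n} w_j·x_j = c. -/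
/-!
With `z_j = x_j + y_j` the merged equation reads
`∑ 2^(n-j) z_j + 2ⁿ ∑ w_j x_j = 2ⁿ (c + 1) - 1`, so `∑_{i<n} 2^i z_{n-i} ≡ -1 (mod 2ⁿ)`.
A number `≡ -1 (mod 2ⁿ)` written as a sum of the powers `2^0, …, 2^(n-1)` (with repetition)
needs at least `n` summands, and exactly `n` only if every power occurs once: the lowest power
must occur an odd number of times, and pairs of it carry into the next one. Hence
`∑ z_j ≤ n` forces `z_j = 1`, the slack part is `2ⁿ - 1`, and what is left is `2ⁿ ∑ w_j x_j = 2ⁿ c`.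
-/

open Finset

lemma exists_carry_of_two_pow_succ_dvd {n k : ℕ} {b : ℕ → ℕ}
    (h : 2 ^ (n + 1) ∣ k + ∑ i ∈ range (n + 1), 2 ^ i * b i + 1) :
    ∃ k', k + b 0 = 2 * k' + 1 ∧ 2 ^ n ∣ k' + ∑ i ∈ range n, 2 ^ i * b (i + 1) + 1 := by
  have hsum : ∑ i ∈ range (n + 1), 2 ^ i * b i = 2 * ∑ i ∈ range n, 2 ^ i * b (i + 1) + b 0 := by
    simp only [sum_range_succ', pow_succ, pow_zero, one_mul, mul_sum]
    congr 1
    exact sum_congr rfl fun i _ => by ring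
  obtain ⟨q, hq⟩ := h
  rw [hsum, pow_succ, mul_right_comm] at hq
  exact ⟨(k + b 0) / 2, by omega, q, by omega⟩

/-- `k` counts extra summands `2^0`; in the induction it holds the carry from the position below. -/
lemma le_add_sum_of_two_pow_dvd {n k : ℕ} {b : ℕ → ℕ}
    (h : 2 ^ n ∣ k + ∑ i ∈ range n, 2 ^ i * b i + 1) :
    n ≤ k + ∑ i ∈ range n, b i := by
  induction n generalizing k b with
  | zero => exact Nat.zero_le _
  | succ n ih =>
    obtain ⟨k', hk', hdvd⟩ := exists_carry_of_two_pow_succ_dvd h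
    have hbound := ih hdvd
    rw [sum_range_succ']
    omega

lemma eq_one_of_two_pow_dvd_of_sum_le {n : ℕ} {b : ℕ → ℕ}
    (h : 2 ^ n ∣ ∑ i ∈ range n, 2 ^ i * b i + 1) (hle : ∑ i ∈ range n, b i ≤ n) :
    ∀ i < n, b i = 1 := by
  induction n generalizing b with
  | zero => exact fun i hi => absurd hi (Nat.not_lt_zero i)
  | succ n ih =>
    obtain ⟨k', hk', hdvd⟩ := exists_carry_of_two_pow_succ_dvd (k := 0) (by simpa using h)
    have hbound := le_add_sum_of_two_pow_dvd hdvd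
    rw [sum_range_succ'] at hle
    obtain rfl : k' = 0 := by omega
    have htail := ih (by simpa using hdvd) (by omega)
    rintro (_ | i) hi
    · omega
    · exact htail i (by omega)

lemma sum_Icc_one_eq_sum_range_reflect {M : Type*} [AddCommMonoid M] (f : ℕ → M) (n : ℕ) :
    ∑ j ∈ Icc 1 n, f j = ∑ i ∈ range n, f (n - i) := by
  refine sum_nbij' (n - ·) (n - ·) ?_ ?_ ?_ ?_ ?_ <;> intro j hj <;>
    simp only [mem_Icc, mem_range] at hj ⊢
  any_goals omega
  rw [Nat.sub_sub_self hj.2]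

lemma sum_Icc_two_pow_sub_mul (n : ℕ) (a : ℕ → ℕ) :
    ∑ j ∈ Icc 1 n, 2 ^ (n - j) * a j = ∑ i ∈ range n, 2 ^ i * a (n - i) := by
  rw [sum_Icc_one_eq_sum_range_reflect]
  exact sum_congr rfl fun i hi => by rw [Nat.sub_sub_self (mem_range.mp hi).le]

lemma sum_Icc_two_pow_sub (n : ℕ) : ∑ j ∈ Icc 1 n, 2 ^ (n - j) = 2 ^ n - 1 := by
  have h := sum_Icc_two_pow_sub_mul n (fun _ => 1)
  simp only [mul_one] at h
  rw [h]
  exact Nat.eq_sub_of_add_eq (by simpa using geom_sum_mul_add (1 : ℕ) n)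

lemma eq_one_of_two_pow_dvd_sum_Icc {n : ℕ} {a : ℕ → ℕ}
    (h : 2 ^ n ∣ ∑ j ∈ Icc 1 n, 2 ^ (n - j) * a j + 1) (hle : ∑ j ∈ Icc 1 n, a j ≤ n) :
    ∀ j ∈ Icc 1 n, a j = 1 := by
  rw [sum_Icc_two_pow_sub_mul] at h
  rw [sum_Icc_one_eq_sum_range_reflect] at hle
  intro j hj
  rw [mem_Icc] at hj
  simpa [Nat.sub_sub_self hj.2] using eq_one_of_two_pow_dvd_of_sum_le h hle (n - j) (by omega)

lemma sum_merged_eq {ι : Type*} (s : Finset ι) (C : ℕ) (u w x y : ι → ℕ) :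
    ∑ j ∈ s, ((u j + C * w j) * x j + u j * y j)
      = ∑ j ∈ s, u j * (x j + y j) + C * ∑ j ∈ s, w j * x j := by
  rw [mul_sum, ← sum_add_distrib]
  exact sum_congr rfl fun j _ => by ring

theorem sspd_merged_equivalence_general (n : ℕ) (w : ℕ → ℕ) (c : ℕ) :
    ((∃ x : ℕ → ℕ, (∀ j ∈ Finset.Icc 1 n, x j = 0 ∨ x j = 1) ∧
        ∑ j ∈ Finset.Icc 1 n, w j * x j = c) ↔
      (∃ x y : ℕ → ℕ,
        ∑ j ∈ Finset.Icc 1 n,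
            ((2 ^ (n - j) + 2 ^ n * w j) * x j + 2 ^ (n - j) * y j)
          = 2 ^ n * c + 2 ^ n - 1 ∧
        ∑ j ∈ Finset.Icc 1 n, (x j + y j) ≤ n)) ∧
    (∀ x y : ℕ → ℕ,
      ∑ j ∈ Finset.Icc 1 n,
          ((2 ^ (n - j) + 2 ^ n * w j) * x j + 2 ^ (n - j) * y j)
        = 2 ^ n * c + 2 ^ n - 1 →
      ∑ j ∈ Finset.Icc 1 n, (x j + y j) ≤ n →
      (∀ j ∈ Finset.Icc 1 n, x j + y j = 1) ∧
      ∑ j ∈ Finset.Icc 1 n, w j * x j = c) := by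
  have hpos : 0 < 2 ^ n := Nat.two_pow_pos n
  have hgeom := sum_Icc_two_pow_sub n
  have sound : ∀ x y : ℕ → ℕ,
      ∑ j ∈ Icc 1 n, ((2 ^ (n - j) + 2 ^ n * w j) * x j + 2 ^ (n - j) * y j)
        = 2 ^ n * c + 2 ^ n - 1 →
      ∑ j ∈ Icc 1 n, (x j + y j) ≤ n →
      (∀ j ∈ Icc 1 n, x j + y j = 1) ∧ ∑ j ∈ Icc 1 n, w j * x j = c := by
    intro x y heq hle
    rw [sum_merged_eq] at heq
    have hdvd : 2 ^ n ∣ ∑ j ∈ Icc 1 n, 2 ^ (n - j) * (x j + y j) + 1 :=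
      (Nat.dvd_add_right (dvd_mul_right _ (∑ j ∈ Icc 1 n, w j * x j))).mp
        ⟨c + 1, by rw [mul_add_one]; omega⟩
    have hone := eq_one_of_two_pow_dvd_sum_Icc hdvd hle
    rw [sum_congr rfl fun j hj => by rw [hone j hj, mul_one], hgeom] at heq
    exact ⟨hone, Nat.eq_of_mul_eq_mul_left hpos (by omega)⟩
  refine ⟨⟨?_, fun ⟨x, y, heq, hle⟩ => ?_⟩, sound⟩
  · rintro ⟨x, hx, hxc⟩
    have hone : ∀ j ∈ Icc 1 n, x j + (1 - x j) = 1 := fun j hj => by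
      rcases hx j hj with h | h <;> simp [h]
    refine ⟨x, (1 - x ·), ?_, ?_⟩
    · rw [sum_merged_eq, sum_congr rfl fun j hj => by rw [hone j hj, mul_one], hgeom, hxc]
      omega
    · simp [sum_congr rfl hone]
  · obtain ⟨hone, hxc⟩ := sound x y heq hle
    exact ⟨x, fun j hj => by have := hone j hj; omega, hxc⟩

/-- Equivalence of the subset-sum decision problem SSP-D(w,c) with its merged
formulation SSP-D₃ (coefficients `w̃_j = 2^{n−j} + 2ⁿ·w_j`, `w̄_j = 2^{n−j}`,
target `c̄ = 2ⁿ·c + 2ⁿ − 1`), together with the fact that any witness of the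
merged formulation satisfies `x_j + y_j = 1` for all `j` and `∑ w_j·x_j = c`. -/
theorem sspd_merged_equivalence (n : ℕ) (hn : 1 ≤ n) (w : ℕ → ℕ) (c : ℕ) :
    ((∃ x : ℕ → ℕ, (∀ j ∈ Finset.Icc 1 n, x j = 0 ∨ x j = 1) ∧
        ∑ j ∈ Finset.Icc 1 n, w j * x j = c) ↔
      (∃ x y : ℕ → ℕ,
        ∑ j ∈ Finset.Icc 1 n,
            ((2 ^ (n - j) + 2 ^ n * w j) * x j + 2 ^ (n - j) * y j)
          = 2 ^ n * c + 2 ^ n - 1 ∧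
        ∑ j ∈ Finset.Icc 1 n, (x j + y j) ≤ n)) ∧
    (∀ x y : ℕ → ℕ,
      ∑ j ∈ Finset.Icc 1 n,
          ((2 ^ (n - j) + 2 ^ n * w j) * x j + 2 ^ (n - j) * y j)
        = 2 ^ n * c + 2 ^ n - 1 →
      ∑ j ∈ Finset.Icc 1 n, (x j + y j) ≤ n →
      (∀ j ∈ Finset.Icc 1 n, x j + y j = 1) ∧
      ∑ j ∈ Finset.Icc 1 n, w j * x j = c) :=
  sspd_merged_equivalence_general n w c
end
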